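/- For every integer j ≥ 2: N(−F_1, +F_j) + N(+F_1, +F_j) = N(+F_j) − N(+F_{j−1}); that is, the number of nonzero integers whose far-difference representation has largest-index summand +F_j and smallest-index summand ±F_1 equals the number with largest-index summand +F_j minus the number with largest-index summand +F_{j−1}. -/

import Mathlib

/-- The Fibonacci numbers indexed as `F 1 = 1, F 2 = 2, F 3 = 3, F 4 = 5, …`,
so `F (n+1) = F n + F (n-1)`. -/
def F (n : ℕ) : ℕ := Nat.fib (n + 1)

/-- `(P, N)` encodes a far-difference representation: `P` is the set of indices of
positive summands and `N` the set of indices of negative summands; all indices are `≥ 1`,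
same-sign indices differ by at least `4`, and opposite-sign indices differ by at least `3`. -/
def IsFarDiff (P N : Finset ℕ) : Prop :=
  (∀ i ∈ P, 1 ≤ i) ∧ (∀ i ∈ N, 1 ≤ i) ∧
  (∀ i ∈ P, ∀ j ∈ P, i < j → 4 ≤ j - i) ∧
  (∀ i ∈ N, ∀ j ∈ N, i < j → 4 ≤ j - i) ∧
  (∀ i ∈ P, ∀ j ∈ N, (i < j → 3 ≤ j - i) ∧ (j < i → 3 ≤ i - j) ∧ i ≠ j)

/-- The integer represented by the far-difference data `(P, N)`:
`∑_{i ∈ P} F i − ∑_{i ∈ N} F i`. -/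
def fdVal (P N : Finset ℕ) : ℤ :=
  (∑ i ∈ P, (F i : ℤ)) - ∑ i ∈ N, (F i : ℤ)

/-- `S n = F n + F (n-4) + F (n-8) + ⋯`, the sum over positive indices, with `S 0 = 0`. -/
def S : ℕ → ℕ
  | 0 => 0
  | n + 1 => F (n + 1) + S (n + 1 - 4)

/-- The summand `ε F i` occurs in the representation `(P, N)`:
`i ∈ P` if `ε = 1`, and `i ∈ N` if `ε = -1`. -/
def SignedMem (ε : ℤ) (i : ℕ) (P N : Finset ℕ) : Prop :=
  (ε = 1 ∧ i ∈ P) ∨ (ε = -1 ∧ i ∈ N)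

/-- The set of (nonzero) integers whose far-difference representation has smallest-index
summand `ε F i` and largest-index summand `ε' F j`. -/
def fdSet (ε : ℤ) (i : ℕ) (ε' : ℤ) (j : ℕ) : Set ℤ :=
  {m : ℤ | ∃ P N : Finset ℕ, IsFarDiff P N ∧ fdVal P N = m ∧
    SignedMem ε i P N ∧ SignedMem ε' j P N ∧ ∀ r ∈ P ∪ N, i ≤ r ∧ r ≤ j}

/-- `N(ε F i, ε' F j)`: the number of nonzero integers whose far-difference
representation has smallest-index summand `ε F i` and largest-index summand `ε' F j`. -/
noncomputable def fdCount (ε : ℤ) (i : ℕ) (ε' : ℤ) (j : ℕ) : ℕ :=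
  (fdSet ε i ε' j).ncard

/-- The set of (nonzero) integers whose far-difference representation has largest-index
summand `ε' F j`. -/
def fdTopSet (ε' : ℤ) (j : ℕ) : Set ℤ :=
  {m : ℤ | ∃ P N : Finset ℕ, IsFarDiff P N ∧ fdVal P N = m ∧
    SignedMem ε' j P N ∧ ∀ r ∈ P ∪ N, r ≤ j}

/-- `N(ε' F j)`: the number of nonzero integers whose far-difference representation has
largest-index summand `ε' F j`. -/
noncomputable def fdTopCount (ε' : ℤ) (j : ℕ) : ℕ :=
  (fdTopSet ε' j).ncard

/-! Integers are counted through their representations `(P, N)`, which is legitimate because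
`fdVal` is injective on far-difference data. Injectivity comes from the bounds
`S (t - 1) < fdVal P N ≤ S t` for a representation with top summand `+F t`: they show that the
value determines the top summand, which can then be peeled off.

A representation with top summand `ε' F (j + 1)` either contains `±F 1` or has all indices
`≥ 2`, and shifting every index up by one is a bijection from the representations with top
summand `ε' F j` onto the latter. -/

open Finset

lemma F_add_two (n : ℕ) : F (n + 2) = F (n + 1) + F n := by
  simp only [F, Nat.fib_add_two]; ring

lemma S_eq_F_add_S_sub_four {t : ℕ} (ht : 1 ≤ t) : S t = F t + S (t - 4) := by
  obtain ⟨n, rfl⟩ := Nat.exists_eq_add_of_le' ht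
  rw [S]

theorem S_sub_one_add_S_sub_three_lt_F : ∀ t, S (t - 1) + S (t - 3) < F t
  | 0 | 1 | 2 | 3 | 4 => by simp [S, F, Nat.fib_add_two]
  | n + 5 => by
    have ih := S_sub_one_add_S_sub_three_lt_F (n + 3)
    have hS : S (n + 4) = F (n + 4) + S n := S_eq_F_add_S_sub_four (by omega)
    simp only [Nat.add_sub_cancel, show n + 5 - 1 = n + 4 by omega,
      show n + 5 - 3 = n + 2 by omega, show n + 3 - 1 = n + 2 by omega] at ih ⊢
    have hF : F (n + 5) = F (n + 4) + F (n + 3) := F_add_two (n + 3)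
    omega

lemma S_strictMono : StrictMono S := by
  refine strictMono_nat_of_lt_succ fun n => ?_
  calc S n < F (n + 1) := by
        have := S_sub_one_add_S_sub_three_lt_F (n + 1)
        rw [Nat.add_sub_cancel] at this
        omega
    _ ≤ S (n + 1) := by rw [S_eq_F_add_S_sub_four (by omega)]; omega

lemma fdVal_swap (P N : Finset ℕ) : fdVal N P = -fdVal P N := by
  simp [fdVal]

lemma fdVal_insert {P : Finset ℕ} {t : ℕ} (ht : t ∉ P) (N : Finset ℕ) :
    fdVal (insert t P) N = F t + fdVal P N := by
  simp only [fdVal, sum_insert ht]; ring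

lemma fdVal_of_mem {P : Finset ℕ} {t : ℕ} (ht : t ∈ P) (N : Finset ℕ) :
    fdVal P N = F t + fdVal (P.erase t) N := by
  conv_lhs => rw [← insert_erase ht]
  exact fdVal_insert (notMem_erase t P) N

namespace IsFarDiff

variable {P N P' N' : Finset ℕ}

lemma symm (h : IsFarDiff P N) : IsFarDiff N P :=
  let ⟨hP, hN, hPP, hNN, hPN⟩ := h
  ⟨hN, hP, hNN, hPP, fun i hi j hj =>
    ⟨(hPN j hj i hi).2.1, (hPN j hj i hi).1, (hPN j hj i hi).2.2.symm⟩⟩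

lemma mono (h : IsFarDiff P N) (hP : P' ⊆ P) (hN : N' ⊆ N) :
    IsFarDiff P' N' :=
  let ⟨h1, h2, h3, h4, h5⟩ := h
  ⟨fun i hi => h1 i (hP hi), fun i hi => h2 i (hN hi),
    fun i hi j hj => h3 i (hP hi) j (hP hj), fun i hi j hj => h4 i (hN hi) j (hN hj),
    fun i hi j hj => h5 i (hP hi) j (hN hj)⟩

lemma one_le (h : IsFarDiff P N) {r : ℕ} (hr : r ∈ P ∪ N) : 1 ≤ r :=
  (mem_union.1 hr).elim (h.1 r) (h.2.1 r)

lemma disjoint (h : IsFarDiff P N) : Disjoint P N :=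
  disjoint_left.2 fun i hP hN => (h.2.2.2.2 i hP i hN).2.2 rfl

lemma image (h : IsFarDiff P N) (f : ℕ → ℕ)
    (hf : ∀ x ∈ P ∪ N, ∀ y ∈ P ∪ N, x ≤ y → f y = f x + (y - x))
    (hpos : ∀ x ∈ P ∪ N, 1 ≤ f x) :
    IsFarDiff (P.image f) (N.image f) := by
  obtain ⟨-, -, hPP, hNN, hPN⟩ := h
  have hdiff : ∀ x ∈ P ∪ N, ∀ y ∈ P ∪ N,
      (f x < f y ↔ x < y) ∧ f y - f x = y - x := by
    intro x hx y hy
    rcases le_total x y with hxy | hxy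
    · have := hf x hx y hy hxy; omega
    · have := hf y hy x hx hxy; omega
  refine ⟨?_, ?_, ?_, ?_, ?_⟩ <;> simp only [forall_mem_image]
  · exact fun x hx => hpos x (mem_union_left _ hx)
  · exact fun x hx => hpos x (mem_union_right _ hx)
  · intro x hx y hy hlt
    have := hdiff x (mem_union_left _ hx) y (mem_union_left _ hy)
    have := hPP x hx y hy (this.1.1 hlt)
    omega
  · intro x hx y hy hlt
    have := hdiff x (mem_union_right _ hx) y (mem_union_right _ hy)
    have := hNN x hx y hy (this.1.1 hlt)
    omega
  · intro x hx y hy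
    have hxy := hdiff x (mem_union_left _ hx) y (mem_union_right _ hy)
    have hyx := hdiff y (mem_union_right _ hy) x (mem_union_left _ hx)
    obtain ⟨h1, h2, h3⟩ := hPN x hx y hy
    refine ⟨fun hlt => ?_, fun hlt => ?_, fun heq => ?_⟩
    · have := h1 (hxy.1.1 hlt); omega
    · have := h2 (hyx.1.1 hlt); omega
    · rcases lt_or_gt_of_ne h3 with hlt | hlt
      · have := h1 hlt; omega
      · have := h2 hlt; omega

lemma fdVal_le_S (h : IsFarDiff P N) {a : ℕ} (hP : ∀ i ∈ P, i ≤ a) : fdVal P N ≤ S a := by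
  induction P using Finset.induction_on_max generalizing a with
  | empty =>
    have : (0 : ℤ) ≤ ∑ i ∈ N, (F i : ℤ) := sum_nonneg fun _ _ => Int.natCast_nonneg _
    simp only [fdVal, sum_empty, zero_sub]
    omega
  | insert t P hlt ih =>
    have hgap : ∀ i ∈ P, i ≤ t - 4 := fun i hi => by
      have := h.2.2.1 i (mem_insert_of_mem hi) t (mem_insert_self t P) (hlt i hi)
      omega
    have hrest := ih (h.mono (subset_insert t P) subset_rfl) hgap
    have hS : S t ≤ S a := S_strictMono.monotone (hP t (mem_insert_self t P))
    rw [S_eq_F_add_S_sub_four (h.1 t (mem_insert_self t P))] at hS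
    rw [fdVal_insert fun ht => (hlt t ht).false]
    omega

lemma neg_S_le_fdVal (h : IsFarDiff P N) {b : ℕ} (hN : ∀ i ∈ N, i ≤ b) :
    -(S b : ℤ) ≤ fdVal P N := by
  have := h.symm.fdVal_le_S hN
  rw [fdVal_swap] at this
  omega

lemma S_sub_one_lt_fdVal (h : IsFarDiff P N) {t : ℕ} (ht : t ∈ P)
    (hmax : ∀ r ∈ P ∪ N, r ≤ t) : (S (t - 1) : ℤ) < fdVal P N := by
  have hN : ∀ i ∈ N, i ≤ t - 3 := fun i hi => by
    obtain ⟨-, hgap, hne⟩ := h.2.2.2.2 t ht i hi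
    have := hgap (lt_of_le_of_ne (hmax i (mem_union_right P hi)) hne.symm)
    omega
  have hrest := (h.mono (erase_subset t P) subset_rfl).neg_S_le_fdVal hN
  have hF := S_sub_one_add_S_sub_three_lt_F t
  rw [fdVal_of_mem ht]
  omega

lemma fdVal_pos (h : IsFarDiff P N) {t : ℕ} (ht : t ∈ P) (hmax : ∀ r ∈ P ∪ N, r ≤ t) :
    0 < fdVal P N :=
  lt_of_le_of_lt (Int.natCast_nonneg _) (h.S_sub_one_lt_fdVal ht hmax)

lemma fdVal_neg (h : IsFarDiff P N) {t : ℕ} (ht : t ∈ N) (hmax : ∀ r ∈ P ∪ N, r ≤ t) :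
    fdVal P N < 0 := by
  have := h.symm.fdVal_pos ht (by rwa [union_comm])
  rw [fdVal_swap] at this
  omega

lemma fdVal_ne_zero (h : IsFarDiff P N) (hne : (P ∪ N).Nonempty) : fdVal P N ≠ 0 := by
  have hmax : ∀ r ∈ P ∪ N, r ≤ (P ∪ N).max' hne := fun r hr => le_max' _ r hr
  rcases mem_union.1 (max'_mem _ hne) with ht | ht
  · exact (h.fdVal_pos ht hmax).ne'
  · exact (h.fdVal_neg ht hmax).ne

lemma top_le_of_fdVal_le (h : IsFarDiff P N) (h' : IsFarDiff P' N') {t t' : ℕ}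
    (ht : t ∈ P) (hmax : ∀ r ∈ P ∪ N, r ≤ t) (hmax' : ∀ r ∈ P' ∪ N', r ≤ t')
    (hle : fdVal P N ≤ fdVal P' N') : t ≤ t' := by
  by_contra! hlt
  have hlow := h.S_sub_one_lt_fdVal ht hmax
  have hup := h'.fdVal_le_S (a := t - 1) fun i hi => by
    have := hmax' i (mem_union_left N' hi)
    omega
  omega

lemma top_of_fdVal_eq (h : IsFarDiff P N) (h' : IsFarDiff P' N') {t : ℕ} (ht : t ∈ P)
    (hmax : ∀ r ∈ P ∪ N, r ≤ t) (heq : fdVal P N = fdVal P' N') :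
    t ∈ P' ∧ ∀ r ∈ P' ∪ N', r ≤ t := by
  have hpos := h.fdVal_pos ht hmax
  have hne : (P' ∪ N').Nonempty := by
    by_contra hemp
    obtain ⟨rfl, rfl⟩ := union_eq_empty.1 (not_nonempty_iff_eq_empty.1 hemp)
    rw [heq] at hpos
    simp [fdVal] at hpos
  set t' := (P' ∪ N').max' hne
  have hmax' : ∀ r ∈ P' ∪ N', r ≤ t' := fun r hr => le_max' _ r hr
  have ht' : t' ∈ P' := (mem_union.1 (max'_mem _ hne)).resolve_right fun htN => by
    have := h'.fdVal_neg htN hmax'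
    omega
  have htt' : t = t' := le_antisymm (h.top_le_of_fdVal_le h' ht hmax hmax' heq.le)
    (h'.top_le_of_fdVal_le h ht' hmax' hmax heq.ge)
  exact htt' ▸ ⟨ht', hmax'⟩

/-- Uniqueness in Alpert's theorem. -/
theorem eq_of_fdVal_eq (h : IsFarDiff P N) (h' : IsFarDiff P' N')
    (heq : fdVal P N = fdVal P' N') : P = P' ∧ N = N' := by
  obtain ⟨n, hn⟩ : ∃ n, P.card + N.card = n := ⟨_, rfl⟩
  induction n generalizing P N P' N' with
  | zero =>
    obtain ⟨rfl, rfl⟩ : P = ∅ ∧ N = ∅ := by simpa using hn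
    rcases (P' ∪ N').eq_empty_or_nonempty with hemp | hne
    · obtain ⟨rfl, rfl⟩ := union_eq_empty.1 hemp
      exact ⟨rfl, rfl⟩
    · exact absurd (by simpa [fdVal] using heq.symm) (h'.fdVal_ne_zero hne)
  | succ n ih =>
    have hne : (P ∪ N).Nonempty := by
      by_contra hemp
      obtain ⟨rfl, rfl⟩ := union_eq_empty.1 (not_nonempty_iff_eq_empty.1 hemp)
      simp at hn
    obtain ⟨t, htU, hmax⟩ : ∃ t ∈ P ∪ N, ∀ r ∈ P ∪ N, r ≤ t :=
      ⟨_, max'_mem _ hne, fun r hr => le_max' _ r hr⟩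
    wlog htP : t ∈ P generalizing P N P' N'
    · have htN : t ∈ N := (mem_union.1 htU).resolve_left htP
      obtain ⟨hN, hP⟩ := this h.symm h'.symm (by rw [fdVal_swap, fdVal_swap P', heq])
        (by omega) (by rwa [union_comm]) (by rwa [union_comm]) (by rwa [union_comm]) htN
      exact ⟨hP, hN⟩
    obtain ⟨ht', -⟩ := h.top_of_fdVal_eq h' htP hmax heq
    have hrest := ih (h.mono (erase_subset t P) subset_rfl)
      (h'.mono (erase_subset t P') subset_rfl)
      (by rw [fdVal_of_mem htP, fdVal_of_mem ht'] at heq; omega)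
      (by rw [card_erase_of_mem htP]; have := card_pos.2 ⟨t, htP⟩; omega)
    rw [← insert_erase htP, ← insert_erase ht', hrest.1]
    exact ⟨rfl, hrest.2⟩

end IsFarDiff

lemma injOn_uncurry_fdVal : Set.InjOn (Function.uncurry fdVal) {pq | IsFarDiff pq.1 pq.2} :=
  fun _ h _ h' heq => Prod.ext_iff.2 (IsFarDiff.eq_of_fdVal_eq h h' heq)

lemma signedMem_one_iff {i : ℕ} {P N : Finset ℕ} : SignedMem 1 i P N ↔ i ∈ P := by
  simp [SignedMem]

lemma signedMem_neg_one_iff {i : ℕ} {P N : Finset ℕ} :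
    SignedMem (-1) i P N ↔ i ∈ N := by
  simp [SignedMem]

def repsWithTop (ε : ℤ) (j : ℕ) : Set (Finset ℕ × Finset ℕ) :=
  {pq | IsFarDiff pq.1 pq.2 ∧ SignedMem ε j pq.1 pq.2 ∧ ∀ r ∈ pq.1 ∪ pq.2, r ≤ j}

lemma repsWithTop_finite (ε : ℤ) (j : ℕ) : (repsWithTop ε j).Finite := by
  refine ((range (j + 1)).powerset ×ˢ (range (j + 1)).powerset).finite_toSet.subset ?_
  rintro ⟨P, N⟩ ⟨-, -, hle⟩
  simp only [coe_product, Set.mem_prod, mem_coe, mem_powerset]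
  exact ⟨fun r hr => mem_range_succ_iff.2 (hle r (mem_union_left N hr)),
    fun r hr => mem_range_succ_iff.2 (hle r (mem_union_right P hr))⟩

lemma fdTopCount_eq_ncard (ε : ℤ) (j : ℕ) : fdTopCount ε j = (repsWithTop ε j).ncard := by
  have himage : fdTopSet ε j = Function.uncurry fdVal '' repsWithTop ε j := by
    ext m
    constructor
    · rintro ⟨P, N, hfd, rfl, htop, hle⟩
      exact ⟨(P, N), ⟨hfd, htop, hle⟩, rfl⟩
    · rintro ⟨⟨P, N⟩, ⟨hfd, htop, hle⟩, rfl⟩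
      exact ⟨P, N, hfd, rfl, htop, hle⟩
  rw [fdTopCount, himage, (injOn_uncurry_fdVal.mono fun _ h => h.1).ncard_image]

lemma fdCount_one_eq_ncard (ε ε' : ℤ) (j : ℕ) :
    fdCount ε 1 ε' j = {pq ∈ repsWithTop ε' j | SignedMem ε 1 pq.1 pq.2}.ncard := by
  have himage : fdSet ε 1 ε' j =
      Function.uncurry fdVal '' {pq ∈ repsWithTop ε' j | SignedMem ε 1 pq.1 pq.2} := by
    ext m
    constructor
    · rintro ⟨P, N, hfd, rfl, hbot, htop, hle⟩
      exact ⟨(P, N), ⟨⟨hfd, htop, fun r hr => (hle r hr).2⟩, hbot⟩, rfl⟩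
    · rintro ⟨⟨P, N⟩, ⟨⟨hfd, htop, hle⟩, hbot⟩, rfl⟩
      exact ⟨P, N, hfd, rfl, hbot, htop, fun r hr => ⟨hfd.one_le hr, hle r hr⟩⟩
  rw [fdCount, himage, (injOn_uncurry_fdVal.mono fun _ h => h.1.1).ncard_image]

def shiftUp (pq : Finset ℕ × Finset ℕ) : Finset ℕ × Finset ℕ :=
  (pq.1.image (· + 1), pq.2.image (· + 1))

lemma shiftUp_injective : Function.Injective shiftUp :=
  Prod.map_injective.2
    ⟨image_injective (add_left_injective 1), image_injective (add_left_injective 1)⟩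

lemma image_sub_one_image_add_one {A : Finset ℕ} (hA : ∀ x ∈ A, 1 ≤ x) :
    (A.image (· - 1)).image (· + 1) = A := by
  rw [image_image]
  conv_rhs => rw [← image_id (s := A)]
  exact image_congr fun x hx => Nat.sub_add_cancel (hA x hx)

lemma signedMem_image_add_one {ε : ℤ} {j : ℕ} {P N : Finset ℕ} :
    SignedMem ε (j + 1) (P.image (· + 1)) (N.image (· + 1)) ↔ SignedMem ε j P N := by
  simp only [SignedMem, (add_left_injective 1).mem_finset_image]

lemma image_shiftUp_repsWithTop (ε : ℤ) (j : ℕ) :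
    shiftUp '' repsWithTop ε j = repsWithTop ε (j + 1) \ {pq | 1 ∈ pq.1 ∪ pq.2} := by
  refine Set.Subset.antisymm ?_ fun ⟨P, N⟩ ⟨⟨hfd, htop, hle⟩, h1⟩ => ?_
  · rintro _ ⟨⟨P, N⟩, ⟨hfd, htop, hle⟩, rfl⟩
    refine ⟨⟨hfd.image _ (fun x _ y _ _ => by omega) (fun _ _ => by omega),
      signedMem_image_add_one.2 htop, ?_⟩, ?_⟩
    · simp only [shiftUp, ← image_union, forall_mem_image]
      exact fun r hr => by have := hle r hr; omega
    · simp only [shiftUp, ← image_union, Set.mem_ofPred_eq, mem_image, not_exists, not_and]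
      exact fun r hr h1 => by have := hfd.one_le hr; omega
  · have h2 : ∀ r ∈ P ∪ N, 2 ≤ r := fun r hr => by
      have := hfd.one_le hr
      have : r ≠ 1 := fun hr1 => h1 (hr1 ▸ hr)
      omega
    refine ⟨(P.image (· - 1), N.image (· - 1)), ⟨hfd.image _ ?_ ?_, ?_, ?_⟩, ?_⟩
    · exact fun x hx y hy hxy => by have := h2 x hx; omega
    · exact fun x hx => by have := h2 x hx; omega
    · rwa [← signedMem_image_add_one, image_sub_one_image_add_one hfd.1,
        image_sub_one_image_add_one hfd.2.1]
    · simp only [← image_union, forall_mem_image]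
      exact fun r hr => by have := hle r hr; omega
    · exact Prod.ext (image_sub_one_image_add_one hfd.1) (image_sub_one_image_add_one hfd.2.1)

lemma repsWithTop_inter_eq_union (ε : ℤ) (j : ℕ) :
    repsWithTop ε j ∩ {pq | 1 ∈ pq.1 ∪ pq.2} =
      {pq ∈ repsWithTop ε j | SignedMem (-1) 1 pq.1 pq.2} ∪
        {pq ∈ repsWithTop ε j | SignedMem 1 1 pq.1 pq.2} := by
  ext pq
  simp only [Set.mem_inter_iff, Set.mem_union, Set.mem_ofPred_eq, mem_union,
    signedMem_one_iff, signedMem_neg_one_iff]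
  tauto

theorem fdCount_add_fdCount_add_fdTopCount (ε : ℤ) (j : ℕ) :
    fdCount (-1) 1 ε (j + 1) + fdCount 1 1 ε (j + 1) + fdTopCount ε j =
      fdTopCount ε (j + 1) := by
  have hfin := repsWithTop_finite ε (j + 1)
  have hdisj : Disjoint {pq ∈ repsWithTop ε (j + 1) | SignedMem (-1) 1 pq.1 pq.2}
      {pq ∈ repsWithTop ε (j + 1) | SignedMem 1 1 pq.1 pq.2} :=
    Set.disjoint_left.2 fun pq hN hP =>
      disjoint_left.1 hN.1.1.disjoint (signedMem_one_iff.1 hP.2) (signedMem_neg_one_iff.1 hN.2)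
  rw [fdCount_one_eq_ncard, fdCount_one_eq_ncard, fdTopCount_eq_ncard, fdTopCount_eq_ncard,
    ← Set.ncard_union_eq hdisj (hfin.subset (Set.sep_subset _ _))
      (hfin.subset (Set.sep_subset _ _)),
    ← repsWithTop_inter_eq_union,
    ← Set.ncard_image_of_injective (repsWithTop ε j) shiftUp_injective,
    image_shiftUp_repsWithTop, Set.ncard_inter_add_ncard_sdiff_eq_ncard _ _ hfin]

/-- For every `j ≥ 2`,
`N(−F_1, +F_j) + N(+F_1, +F_j) = N(+F_j) − N(+F_{j−1})`. -/
theorem fardifference_inclusion_exclusion (j : ℕ) (hj : 2 ≤ j) :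
    (fdCount (-1) 1 1 j : ℤ) + fdCount 1 1 1 j
      = (fdTopCount 1 j : ℤ) - fdTopCount 1 (j - 1) := by
  obtain ⟨k, rfl⟩ : ∃ k, j = k + 1 := ⟨j - 1, by omega⟩
  have := fdCount_add_fdCount_add_fdTopCount 1 k
  rw [Nat.add_sub_cancel]
  omega
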